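/- Fix n ≥ 1, T > 0, and x₀ ∈ ℝⁿ, and let g, h : ℝⁿ → ℝⁿ be globally Lipschitz continuous. Let x̄ : ℝ → ℝⁿ satisfy x̄(0) = x₀ and x̄'(t) = g(x̄(t)) for all t ∈ [0,T], and for each ε ∈ (0,1] let x_ε : ℝ → ℝⁿ satisfy x_ε(0) = x₀ and x_ε'(t) = (1−ε) g(x_ε(t)) + ε h(x_ε(t)) for all t ∈ [0,T]. Then (1/ε) ∫₀ᵀ ‖x_ε(t) − x̄(t)‖² dt tends to 0 as ε → 0⁺ (that is, the map ε ↦ (1/ε) ∫₀ᵀ ‖x_ε(t) − x̄(t)‖² dt tends to 0 along the filter of positive ε approaching 0). -/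

import Mathlib

/-!
Both `X ε` and `x̄` start at `x₀`, and `X ε` solves the ODE with field `vε = (1 - ε) • g + ε • h`,
which is `(Kg + Kh)`-Lipschitz uniformly in `ε ∈ [0, 1]`. Along `x̄` the two fields differ by
`ε • (h - g)(x̄)`, which is `O(ε)` because `x̄` stays in a compact set on `[0, T]`. Grönwall's
inequality thus gives `‖X ε t - x̄ t‖ ≤ ε D` on `[0, T]`, so `(1/ε) ∫₀ᵀ ‖X ε - x̄‖² ≤ ε D² T → 0`.
-/

open Set Filter Topology Interval

variable {E : Type*} [NormedAddCommGroup E]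

theorem tendsto_one_div_mul_integral_sq_norm {u : ℝ → ℝ → E} {T D : ℝ}
    (hu : ∀ᶠ ε in 𝓝[>] 0, ∀ t ∈ Ι 0 T, ‖u ε t‖ ≤ ε * D) :
    Tendsto (fun ε => 1 / ε * ∫ t in (0 : ℝ)..T, ‖u ε t‖ ^ 2) (𝓝[>] 0) (𝓝 0) := by
  have hlim : Tendsto (fun ε : ℝ => ε * (D ^ 2 * |T|)) (𝓝[>] 0) (𝓝 0) := by
    have h : Tendsto (fun ε : ℝ => ε * (D ^ 2 * |T|)) (𝓝 0) (𝓝 (0 * (D ^ 2 * |T|))) :=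
      tendsto_id.mul_const _
    rw [zero_mul] at h
    exact h.mono_left nhdsWithin_le_nhds
  refine squeeze_zero_norm' ?_ hlim
  filter_upwards [hu, self_mem_nhdsWithin] with ε hε (hε0 : 0 < ε)
  have hint : ‖∫ t in (0 : ℝ)..T, ‖u ε t‖ ^ 2‖ ≤ (ε * D) ^ 2 * |T - 0| :=
    intervalIntegral.norm_integral_le_of_norm_le_const fun t ht => by
      rw [Real.norm_of_nonneg (by positivity)]
      exact pow_le_pow_left₀ (norm_nonneg _) (hε t ht) 2
  rw [norm_mul, Real.norm_of_nonneg (by positivity)]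
  calc 1 / ε * ‖∫ t in (0 : ℝ)..T, ‖u ε t‖ ^ 2‖
      ≤ 1 / ε * ((ε * D) ^ 2 * |T - 0|) := by gcongr
    _ = ε * (D ^ 2 * |T|) := by field_simp; ring_nf

variable [NormedSpace ℝ E]

theorem LipschitzWith.one_sub_smul_add_smul {g h : E → E} {Kg Kh : NNReal}
    (hg : LipschitzWith Kg g) (hh : LipschitzWith Kh h) {ε : ℝ} (hε : ε ∈ Icc (0 : ℝ) 1) :
    LipschitzWith (Kg + Kh) fun x => (1 - ε) • g x + ε • h x := by
  have hε' : 1 - ε ∈ Icc (0 : ℝ) 1 := ⟨sub_nonneg.2 hε.2, sub_le_self _ hε.1⟩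
  have hnorm : ∀ c ∈ Icc (0 : ℝ) 1, ‖c‖₊ ≤ 1 := fun c hc => by
    rw [← NNReal.coe_le_coe, coe_nnnorm, Real.norm_of_nonneg hc.1]
    exact hc.2
  refine (((lipschitzWith_smul (1 - ε)).comp hg).add
    ((lipschitzWith_smul ε).comp hh)).weaken ?_
  gcongr
  · exact mul_le_of_le_one_left (by positivity) (hnorm _ hε')
  · exact mul_le_of_le_one_left (by positivity) (hnorm _ hε)

theorem gronwallBound_zero_mul (K ε M x : ℝ) :
    gronwallBound 0 K (ε * M) x = ε * gronwallBound 0 K M x := by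
  unfold gronwallBound
  split_ifs <;> ring

theorem dist_le_gronwallBound_of_near_fields {v w : E → E} {K : NNReal} {δ a b : ℝ}
    {x y : ℝ → E} (hv : LipschitzWith K v)
    (hx : ∀ t ∈ Icc a b, HasDerivAt x (v (x t)) t)
    (hy : ∀ t ∈ Icc a b, HasDerivAt y (w (y t)) t)
    (hvw : ∀ t ∈ Ico a b, dist (w (y t)) (v (y t)) ≤ δ) (ha : x a = y a) :
    ∀ t ∈ Icc a b, dist (y t) (x t) ≤ gronwallBound 0 K δ (t - a) := by
  simpa using dist_le_of_approx_trajectories_ODE (v := fun _ => v) (fun _ => hv)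
    (fun t ht => (hy t ht).continuousAt.continuousWithinAt)
    (fun t ht => (hy t (Ico_subset_Icc_self ht)).hasDerivWithinAt) hvw
    (fun t ht => (hx t ht).continuousAt.continuousWithinAt)
    (fun t ht => (hx t (Ico_subset_Icc_self ht)).hasDerivWithinAt)
    (fun t _ => (dist_self _).le) (by rw [ha, dist_self])

theorem stmt_12_general (n : ℕ) (T : ℝ) (hT : 0 < T)
    (x₀ : EuclideanSpace ℝ (Fin n))
    (g h : EuclideanSpace ℝ (Fin n) → EuclideanSpace ℝ (Fin n))
    (Kg Kh : NNReal) (hg : LipschitzWith Kg g) (hh : LipschitzWith Kh h)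
    (xbar : ℝ → EuclideanSpace ℝ (Fin n))
    (hx0 : xbar 0 = x₀)
    (hxbar : ∀ t ∈ Set.Icc (0 : ℝ) T, HasDerivAt xbar (g (xbar t)) t)
    (X : ℝ → ℝ → EuclideanSpace ℝ (Fin n))
    (hX0 : ∀ ε ∈ Set.Ioc (0 : ℝ) 1, X ε 0 = x₀)
    (hXode : ∀ ε ∈ Set.Ioc (0 : ℝ) 1, ∀ t ∈ Set.Icc (0 : ℝ) T,
      HasDerivAt (X ε) ((1 - ε) • g (X ε t) + ε • h (X ε t)) t) :
    Filter.Tendsto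
      (fun ε : ℝ => (1 / ε) * ∫ t in (0 : ℝ)..T, ‖X ε t - xbar t‖ ^ 2)
      (nhdsWithin 0 (Set.Ioi 0)) (nhds 0) := by
  have hxbar_cont : ContinuousOn xbar (Icc 0 T) := fun t ht =>
    (hxbar t ht).continuousAt.continuousWithinAt
  obtain ⟨M, hM⟩ := isCompact_Icc.exists_bound_of_continuousOn
    ((hh.continuous.comp_continuousOn hxbar_cont).sub (hg.continuous.comp_continuousOn hxbar_cont))
  have hM0 : 0 ≤ M := (norm_nonneg _).trans (hM 0 ⟨le_rfl, hT.le⟩)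
  refine tendsto_one_div_mul_integral_sq_norm (D := gronwallBound 0 (Kg + Kh) M T) ?_
  filter_upwards [Ioc_mem_nhdsGT zero_lt_one] with ε hε t ht
  have ht : t ∈ Icc 0 T := Ioc_subset_Icc_self (by rwa [uIoc_of_le hT.le] at ht)
  have hfields : ∀ s ∈ Ico 0 T,
      dist (g (xbar s)) ((1 - ε) • g (xbar s) + ε • h (xbar s)) ≤ ε * M := fun s hs => by
    rw [← AffineMap.lineMap_apply_module, dist_comm, dist_lineMap_left, dist_eq_norm',
      Real.norm_of_nonneg hε.1.le]
    exact mul_le_mul_of_nonneg_left (hM s (Ico_subset_Icc_self hs)) hε.1.le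
  rw [← dist_eq_norm, dist_comm]
  calc dist (xbar t) (X ε t)
      ≤ gronwallBound 0 (Kg + Kh) (ε * M) (t - 0) :=
        dist_le_gronwallBound_of_near_fields (hg.one_sub_smul_add_smul hh (Ioc_subset_Icc_self hε))
          (hXode ε hε) hxbar hfields (by rw [hX0 ε hε, hx0]) t ht
    _ = ε * gronwallBound 0 (Kg + Kh) M t := by rw [sub_zero, gronwallBound_zero_mul]
    _ ≤ ε * gronwallBound 0 (Kg + Kh) M T :=
        mul_le_mul_of_nonneg_left (gronwallBound_mono le_rfl hM0 (Kg + Kh).coe_nonneg ht.2) hε.1.le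

/-- Key estimate for the nonstandard derivative: with nominal
trajectory `x̄` of `x' = g(x)` and a family `X ε` of solutions of the
`ε`-variational system for `ε ∈ (0,1]`, the quantity
`(1/ε) ∫₀ᵀ ‖X ε t − x̄ t‖² dt` tends to `0` as `ε → 0⁺`. -/
theorem stmt_12 (n : ℕ) (hn : 1 ≤ n) (T : ℝ) (hT : 0 < T)
    (x₀ : EuclideanSpace ℝ (Fin n))
    (g h : EuclideanSpace ℝ (Fin n) → EuclideanSpace ℝ (Fin n))
    (Kg Kh : NNReal) (hg : LipschitzWith Kg g) (hh : LipschitzWith Kh h)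
    (xbar : ℝ → EuclideanSpace ℝ (Fin n))
    (hx0 : xbar 0 = x₀)
    (hxbar : ∀ t ∈ Set.Icc (0 : ℝ) T, HasDerivAt xbar (g (xbar t)) t)
    (X : ℝ → ℝ → EuclideanSpace ℝ (Fin n))
    (hX0 : ∀ ε ∈ Set.Ioc (0 : ℝ) 1, X ε 0 = x₀)
    (hXode : ∀ ε ∈ Set.Ioc (0 : ℝ) 1, ∀ t ∈ Set.Icc (0 : ℝ) T,
      HasDerivAt (X ε) ((1 - ε) • g (X ε t) + ε • h (X ε t)) t) :
    Filter.Tendsto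
      (fun ε : ℝ => (1 / ε) * ∫ t in (0 : ℝ)..T, ‖X ε t - xbar t‖ ^ 2)
      (nhdsWithin 0 (Set.Ioi 0)) (nhds 0) :=
  stmt_12_general n T hT x₀ g h Kg Kh hg hh xbar hx0 hxbar X hX0 hXode
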